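/- Let σ ∈ (0,1), c ≥ 0, and let Ω ⊂ ℝⁿ be a bounded domain. Let u be a positive C² function on Ω whose graph Σ is strictly locally convex, continuous up to ∂Ω with u = c on ∂Ω, and satisfying σ_k(κ[u]) > C(n,k)·σ^k (= σ_k(σ,…,σ)) in Ω. Let B₀ = B_R(b) ⊂ ℝ^{n+1} be the open ball of radius R centered at b = (b', σR) with b' ∉ Ω̄ and dist(b', ∂Ω) > c/σ. If B₀ is disjoint from Ω̄ × {c}, then B₀ is disjoint from Σ, i.e. (x, u(x)) ∉ B₀ for every x ∈ Ω. -/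

import Mathlib

open scoped BigOperators
open Metric Set

noncomputable section

/-- `ℝⁿ` with the Euclidean metric. -/
abbrev En (n : ℕ) := EuclideanSpace ℝ (Fin n)

/-- First partial derivative `∂u/∂xᵢ`. -/
def pgrad {n : ℕ} (u : En n → ℝ) (x : En n) (i : Fin n) : ℝ :=
  fderiv ℝ u x (EuclideanSpace.single i 1)

/-- Second partial derivative `∂²u/∂xᵢ∂xⱼ`. -/
def phess {n : ℕ} (u : En n → ℝ) (x : En n) (i j : Fin n) : ℝ :=
  fderiv ℝ (fun y => fderiv ℝ u y (EuclideanSpace.single j 1)) x (EuclideanSpace.single i 1)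

/-- The gradient of `u` at `x` as a vector in `ℝⁿ`. -/
def gradVec {n : ℕ} (u : En n → ℝ) (x : En n) : En n :=
  WithLp.toLp 2 (fun i => pgrad u x i)

/-- `w = √(1 + |Du|²)`. -/
def wgt {n : ℕ} (u : En n → ℝ) (x : En n) : ℝ :=
  Real.sqrt (1 + ∑ i, pgrad u x i ^ 2)

/-- `γ^{ik} = δ_{ik} − uᵢ u_k / (w(1+w))`. -/
def gam {n : ℕ} (u : En n → ℝ) (x : En n) (i k : Fin n) : ℝ :=
  (if i = k then (1:ℝ) else 0) - pgrad u x i * pgrad u x k / (wgt u x * (1 + wgt u x))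

/-- The matrix `A[u]`, whose eigenvalues are the hyperbolic principal curvatures of the
vertical graph of `u` in the half-space model of `H^{n+1}`. -/
def curvMat {n : ℕ} (u : En n → ℝ) (x : En n) : Matrix (Fin n) (Fin n) ℝ :=
  Matrix.of fun i j => (1 / wgt u x) *
    ((if i = j then (1:ℝ) else 0) +
      u x * ∑ k, ∑ l, gam u x i k * phess u x k l * gam u x l j)

/-- The `k`-th elementary symmetric polynomial of the eigenvalues of the `n × n` matrix `M`,
read off from the characteristic polynomial: `charpoly M = ∏ (X - λᵢ)`, so
`e_k(λ) = (-1)^k · coeff (n-k)`. -/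
def sigmaElem {n : ℕ} (k : ℕ) (M : Matrix (Fin n) (Fin n) ℝ) : ℝ :=
  (-1 : ℝ) ^ k * M.charpoly.coeff (n - k)

/-- A bounded domain in `ℝⁿ` whose boundary is a (finite disjoint union of) smooth closed
embedded hypersurface(s), expressed via local smooth defining functions. -/
def SmoothBoundedDomain {n : ℕ} (Ω : Set (En n)) : Prop :=
  IsOpen Ω ∧ Bornology.IsBounded Ω ∧ Ω.Nonempty ∧
  ∀ x ∈ frontier Ω, ∃ (U : Set (En n)) (ρ : En n → ℝ),
    IsOpen U ∧ x ∈ U ∧ ContDiff ℝ (⊤ : ℕ∞) ρ ∧ (∀ y ∈ U, fderiv ℝ ρ y ≠ 0) ∧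
    Ω ∩ U = {y ∈ U | ρ y < 0} ∧ frontier Ω ∩ U = {y ∈ U | ρ y = 0}

/-- The subsolution setting of the paper. -/
structure SubsolutionSetting {n : ℕ} (k : ℕ) (Ω : Set (En n)) (ψ : En n → ℝ → ℝ)
    (ubar : En n → ℝ) : Prop where
  domain : SmoothBoundedDomain Ω
  ψpos : ∀ x z, 0 ≤ z → 0 < ψ x z
  ψsmooth : ContDiffOn ℝ (⊤ : ℕ∞) (fun p : En n × ℝ => ψ p.1 p.2) {p : En n × ℝ | 0 < p.2}
  ψcont : ContinuousOn (fun p : En n × ℝ => ψ p.1 p.2) {p : En n × ℝ | 0 ≤ p.2}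
  ubar4 : ContDiffOn ℝ 4 ubar Ω
  ubar2 : ContDiffOn ℝ 2 ubar (closure Ω)
  ubarpos : ∀ x ∈ Ω, 0 < ubar x
  ubarconv : ∀ x ∈ Ω, (curvMat ubar x).PosDef
  ubarsub : ∀ x ∈ Ω, ψ x (ubar x) ≤ sigmaElem k (curvMat ubar x)
  ubarbdry : ∀ x ∈ frontier Ω, ubar x = 0

/-- Membership of the point `(x, t) ∈ ℝⁿ × ℝ = ℝ^{n+1}` in the open Euclidean ball of radius `R`
centered at `(c', h)`. -/
def inBallH {n : ℕ} (c' : En n) (h R : ℝ) (x : En n) (t : ℝ) : Prop :=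
  dist x c' ^ 2 + (t - h) ^ 2 < R ^ 2

/-- Membership of `(x, t)` in the sphere of radius `R` centered at `(c', h)`. -/
def onSphereH {n : ℕ} (c' : En n) (h R : ℝ) (x : En n) (t : ℝ) : Prop :=
  dist x c' ^ 2 + (t - h) ^ 2 = R ^ 2

/-- The "almost round" assumption. -/
def AlmostRound {n : ℕ} (k : ℕ) (Ω : Set (En n)) (ψ : En n → ℝ → ℝ) : Prop :=
  ∃ (σs σb Rs Rb : ℝ) (as' ab' : En n),
    0 < σs ∧ σs < σb ∧ σb < 1 ∧ 0 < Rs ∧ Rs < Rb ∧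
    (∀ x ∈ Ω, ∀ z : ℝ, 0 < z → (n.choose k : ℝ) * σb ^ k < ψ x z) ∧
    (∀ x : En n, inBallH as' (-(σs * Rs)) Rs x 0 → x ∈ Ω) ∧
    (∀ x ∈ Ω, inBallH ab' (-(σb * Rb)) Rb x 0) ∧
    (∀ (x : En n) (t : ℝ), inBallH as' (-(σs * Rs)) Rs x t → inBallH ab' (-(σb * Rb)) Rb x t) ∧
    (∃! p : En n × ℝ, onSphereH as' (-(σs * Rs)) Rs p.1 p.2 ∧
      onSphereH ab' (-(σb * Rb)) Rb p.1 p.2)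

/-- Condition (1.8): the Euclidean Hessian of `ū / σ_k^{1/k}(κ[ū])` is positive semidefinite. -/
def Cond18 {n : ℕ} (k : ℕ) (Ω : Set (En n)) (ubar : En n → ℝ) : Prop :=
  ∀ x ∈ Ω, (Matrix.of fun α β : Fin n =>
    phess (fun y => ubar y / (sigmaElem k (curvMat ubar y)) ^ ((k:ℝ)⁻¹)) x α β).PosSemidef

/-- Coordinate directions in `ℝⁿ × ℝ = ℝ^{n+1}`. -/
def dirv {n : ℕ} (i : Fin (n+1)) : En n × ℝ :=
  if h : (i : ℕ) < n then (EuclideanSpace.single ⟨i, h⟩ 1, 0) else (0, 1)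

/-- First directional derivative. -/
def D1 {n : ℕ} (Ψ : En n × ℝ → ℝ) (p v : En n × ℝ) : ℝ := fderiv ℝ Ψ p v

/-- Second directional derivative. -/
def D2 {n : ℕ} (Ψ : En n × ℝ → ℝ) (p v w : En n × ℝ) : ℝ :=
  fderiv ℝ (fun q => fderiv ℝ Ψ q w) p v

/-- The `(n+1) × (n+1)` matrix of condition (1.9). -/
def Cond19Mat {n : ℕ} (k : ℕ) (ψ : En n → ℝ → ℝ) (x : En n) (z : ℝ) :
    Matrix (Fin (n+1)) (Fin (n+1)) ℝ :=
  Matrix.of fun i j =>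
    ((k+1 : ℝ)/(k:ℝ)) * D1 (fun p => ψ p.1 p.2) (x, z) (dirv i)
        * D1 (fun p => ψ p.1 p.2) (x, z) (dirv j) / ψ x z
      - D2 (fun p => ψ p.1 p.2) (x, z) (dirv i) (dirv j)
      + (if (i:ℕ) < n then
           (if (j:ℕ) < n then
              (if i = j then D1 (fun p => ψ p.1 p.2) (x, z) (0,1) / z - (k:ℝ) * ψ x z / z^2
               else 0)
            else - D1 (fun p => ψ p.1 p.2) (x, z) (dirv i) / z)
         else
           (if (j:ℕ) < n then - D1 (fun p => ψ p.1 p.2) (x, z) (dirv j) / z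
            else - (k:ℝ) * ψ x z / z^2 - D1 (fun p => ψ p.1 p.2) (x, z) (0,1) / z))

/-- Condition (1.9). -/
def Cond19 {n : ℕ} (k : ℕ) (Ω : Set (En n)) (ψ : En n → ℝ → ℝ) : Prop :=
  ∀ x ∈ Ω, ∀ z : ℝ, 0 < z → (Cond19Mat k ψ x z).PosSemidef

/-!
Shrink the balls `B_r((b', σr))` of the family containing `B₀`: they are nested and increasing
in `r`, so minimising over the compact region `{(x, t) : x ∈ Ω̄, 0 ≤ t ≤ u x}` the radius of the
member through `(x, t)` gives a first ball `B_{r₀}`, `r₀ < R`, touching that region at some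
point `(x₀, t₀)`. The point cannot lie over `∂Ω`: there `t₀ ≤ c < σ r₀`, so `(x₀, c)` would lie in
`B̄_{r₀} ⊆ B₀`. It cannot lie strictly below the graph, since then `x₀` would locally minimise
`|x - b'|`, i.e. `x₀ = b' ∉ Ω̄`. So the graph touches the lower half of `∂B_{r₀}` from outside at
`x₀`, and the first- and second-order conditions at this contact show `A[u](x₀) ≤ σ I`, whence
`σ_k(κ[u](x₀)) ≤ σ_k(σ, …, σ)`, contradicting the hypothesis.
-/

open Finset Matrix Filter Topology
open scoped InnerProductSpace

theorem Finset.esymm_map_val_le {ι : Type*} (s : Finset ι) (f : ι → ℝ) {a : ℝ}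
    (h0 : ∀ i ∈ s, 0 ≤ f i) (ha : ∀ i ∈ s, f i ≤ a) (k : ℕ) :
    (s.val.map f).esymm k ≤ (#s).choose k * a ^ k := by
  rw [Finset.esymm_map_val, ← Finset.card_powersetCard, ← nsmul_eq_mul]
  refine Finset.sum_le_card_nsmul _ _ _ fun t ht => ?_
  obtain ⟨hts, rfl⟩ := Finset.mem_powersetCard.mp ht
  calc ∏ i ∈ t, f i ≤ ∏ _i ∈ t, a :=
        Finset.prod_le_prod (fun i hi => h0 i (hts hi)) fun i hi => ha i (hts hi)
    _ = a ^ #t := Finset.prod_const a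

theorem sigmaElem_eq_esymm_eigenvalues {n k : ℕ} (hkn : k ≤ n) {A : Matrix (Fin n) (Fin n) ℝ}
    (hA : A.IsHermitian) : sigmaElem k A = (univ.val.map hA.eigenvalues).esymm k := by
  have hcard : Multiset.card (univ.val.map hA.eigenvalues) = n := by simp
  have hcoeff := Multiset.prod_X_sub_C_coeff (univ.val.map hA.eigenvalues)
    (k := n - k) (by omega)
  rw [hcard, Nat.sub_sub_self hkn, Multiset.map_map] at hcoeff
  simp only [Function.comp_def] at hcoeff
  rw [sigmaElem, hA.charpoly_eq]
  simp only [RCLike.ofReal_real_eq_id, id]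
  rw [Finset.prod_eq_multiset_prod, hcoeff, ← mul_assoc, ← mul_pow]
  norm_num

theorem Matrix.IsHermitian.eigenvalues_le_of_dotProduct_mulVec_le {ι : Type*} [Fintype ι]
    [DecidableEq ι] {A : Matrix ι ι ℝ} (hA : A.IsHermitian) {a : ℝ}
    (hQ : ∀ ζ, ζ ⬝ᵥ A *ᵥ ζ ≤ a * (ζ ⬝ᵥ ζ)) (i : ι) : hA.eigenvalues i ≤ a := by
  have hv : ⇑(hA.eigenvectorBasis i) ⬝ᵥ ⇑(hA.eigenvectorBasis i) = 1 := by
    have := hA.eigenvectorBasis.inner_eq_one i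
    rw [EuclideanSpace.inner_eq_star_dotProduct] at this
    simpa using this
  simpa [hA.eigenvalues_eq i, hv] using hQ (hA.eigenvectorBasis i)

theorem sigmaElem_le_of_dotProduct_mulVec_le {n k : ℕ} (hkn : k ≤ n)
    {A : Matrix (Fin n) (Fin n) ℝ} (hA : A.PosSemidef) {a : ℝ}
    (hQ : ∀ ζ, ζ ⬝ᵥ A *ᵥ ζ ≤ a * (ζ ⬝ᵥ ζ)) : sigmaElem k A ≤ n.choose k * a ^ k := by
  rw [sigmaElem_eq_esymm_eigenvalues hkn hA.1]
  simpa using Finset.esymm_map_val_le univ hA.1.eigenvalues (fun i _ => hA.eigenvalues_nonneg i)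
    (fun i _ => hA.1.eigenvalues_le_of_dotProduct_mulVec_le hQ i) k

section CurvatureMatrix

variable {n : ℕ} (u : En n → ℝ) (x : En n)

theorem wgt_pos : 0 < wgt u x := Real.sqrt_pos.mpr (by positivity)

theorem wgt_sq : wgt u x ^ 2 = 1 + pgrad u x ⬝ᵥ pgrad u x := by
  rw [wgt, Real.sq_sqrt (by positivity)]
  simp [dotProduct, sq]

theorem gam_transpose : (of (gam u x))ᵀ = of (gam u x) := by
  ext i j
  simp only [transpose_apply, of_apply, gam, eq_comm (a := i), mul_comm (pgrad u x i)]

theorem gam_mulVec (ζ : Fin n → ℝ) :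
    of (gam u x) *ᵥ ζ = ζ - ((pgrad u x ⬝ᵥ ζ) / (wgt u x * (1 + wgt u x))) • pgrad u x := by
  ext i
  simp only [mulVec, dotProduct, gam, of_apply, sub_mul, ite_mul, one_mul, zero_mul,
    Finset.sum_sub_distrib, Finset.sum_ite_eq, Finset.mem_univ, if_true, Pi.sub_apply,
    Pi.smul_apply, smul_eq_mul, Finset.sum_div, Finset.sum_mul]
  congr 1
  exact Finset.sum_congr rfl fun j _ => by ring

/-- `γ` is the inverse square root of the first fundamental form `I + Du ⊗ Du`. -/
theorem dotProduct_gam_mulVec_add_sq (ζ : Fin n → ℝ) :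
    (of (gam u x) *ᵥ ζ) ⬝ᵥ (of (gam u x) *ᵥ ζ) + (pgrad u x ⬝ᵥ (of (gam u x) *ᵥ ζ)) ^ 2
      = ζ ⬝ᵥ ζ := by
  have hw := wgt_pos u x
  have hq : pgrad u x ⬝ᵥ pgrad u x = wgt u x ^ 2 - 1 := by linarith [wgt_sq u x]
  rw [gam_mulVec]
  simp only [dotProduct_sub, sub_dotProduct, dotProduct_smul, smul_dotProduct, smul_eq_mul,
    dotProduct_comm ζ (pgrad u x)]
  rw [hq]
  field_simp
  ring

theorem curvMat_eq :
    curvMat u x = (wgt u x)⁻¹ • (1 + u x • (of (gam u x) * of (phess u x) * of (gam u x))) := by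
  ext i j
  simp only [curvMat, of_apply, Matrix.smul_apply, Matrix.add_apply, one_apply, mul_apply,
    smul_eq_mul, Finset.sum_mul, one_div]
  rw [Finset.sum_comm]

theorem dotProduct_curvMat_mulVec (ζ : Fin n → ℝ) :
    ζ ⬝ᵥ curvMat u x *ᵥ ζ = (ζ ⬝ᵥ ζ + u x *
      ((of (gam u x) *ᵥ ζ) ⬝ᵥ of (phess u x) *ᵥ (of (gam u x) *ᵥ ζ))) / wgt u x := by
  rw [curvMat_eq, smul_mulVec, add_mulVec, one_mulVec, smul_mulVec, ← mulVec_mulVec,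
    ← mulVec_mulVec, dotProduct_smul, dotProduct_add, dotProduct_smul, dotProduct_mulVec,
    ← mulVec_transpose, gam_transpose, smul_eq_mul, smul_eq_mul, div_eq_inv_mul]

variable {u x}

theorem dotProduct_curvMat_mulVec_le {σ δ : ℝ} (hδ : 0 < δ) (hux : 0 ≤ u x)
    (hσ : δ + u x = σ * (wgt u x * δ))
    (hH : ∀ η, δ * (η ⬝ᵥ of (phess u x) *ᵥ η) ≤ η ⬝ᵥ η + (pgrad u x ⬝ᵥ η) ^ 2)
    (ζ : Fin n → ℝ) : ζ ⬝ᵥ curvMat u x *ᵥ ζ ≤ σ * (ζ ⬝ᵥ ζ) := by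
  rw [dotProduct_curvMat_mulVec, div_le_iff₀ (wgt_pos u x)]
  have h := hH (of (gam u x) *ᵥ ζ)
  rw [dotProduct_gam_mulVec_add_sq] at h
  refine le_of_mul_le_mul_left ?_ hδ
  have hZ : (δ + u x) * (ζ ⬝ᵥ ζ) = σ * (wgt u x * δ) * (ζ ⬝ᵥ ζ) := by rw [hσ]
  nlinarith [mul_le_mul_of_nonneg_left h hux]

end CurvatureMatrix

theorem IsLocalMin.deriv_deriv_nonneg {g : ℝ → ℝ} {a : ℝ} (h : IsLocalMin g a)
    (hc : ContinuousAt g a) : 0 ≤ deriv (deriv g) a := by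
  by_contra! hneg
  have hconst : g =ᶠ[𝓝 a] fun _ => g a :=
    (h.and (isLocalMax_of_deriv_deriv_neg hneg h.deriv_eq_zero hc)).mono
      fun y hy => le_antisymm hy.2 hy.1
  simp [hconst.deriv.deriv_eq] at hneg

section Line

variable {E : Type*} [NormedAddCommGroup E] {u : E → ℝ} {x : E}

theorem ContDiffAt.eventually_hasDerivAt_comp_add_smul [NormedSpace ℝ E]
    (hu : ContDiffAt ℝ 2 u x) (v : E) :
    ∀ᶠ s in 𝓝 (0 : ℝ), HasDerivAt (fun s => u (x + s • v)) (fderiv ℝ u (x + s • v) v) s := by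
  have hline : Tendsto (fun s : ℝ => x + s • v) (𝓝 0) (𝓝 x) :=
    Continuous.tendsto' (by fun_prop) 0 x (by simp)
  filter_upwards [hline.eventually (hu.eventually (by simp))] with s hs
  exact (hs.differentiableAt (by norm_num)).hasFDerivAt.comp_hasDerivAt s
    (((hasDerivAt_id s).smul_const v).const_add x |>.congr_deriv (one_smul ℝ v))

theorem ContDiffAt.hasDerivAt_fderiv_add_smul_apply [NormedSpace ℝ E] (hu : ContDiffAt ℝ 2 u x)
    (v : E) :
    HasDerivAt (fun s : ℝ => fderiv ℝ u (x + s • v) v) (fderiv ℝ (fderiv ℝ u) x v v) 0 := by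
  have hD : HasFDerivAt (fderiv ℝ u) (fderiv ℝ (fderiv ℝ u) x) (x + (0 : ℝ) • v) := by
    rw [zero_smul, add_zero]
    exact ((hu.fderiv_right (m := 1) (by norm_num)).differentiableAt one_ne_zero).hasFDerivAt
  have hline : HasDerivAt (fun s : ℝ => x + s • v) v 0 := by
    simpa using ((hasDerivAt_id (0 : ℝ)).smul_const v).const_add x
  have h0 := hD.comp_hasDerivAt (0 : ℝ) hline
  have h := h0.clm_apply (hasDerivAt_const (0 : ℝ) v)
  simp only [Function.comp_def, map_zero, add_zero] at h
  exact h

theorem norm_add_smul_sub_sq [InnerProductSpace ℝ E] (x b v : E) (s : ℝ) :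
    ‖x + s • v - b‖ ^ 2 = ‖x - b‖ ^ 2 + 2 * s * ⟪x - b, v⟫_ℝ + s ^ 2 * ‖v‖ ^ 2 := by
  rw [add_sub_right_comm, norm_add_sq_real, norm_smul, inner_smul_right, Real.norm_eq_abs,
    mul_pow, sq_abs]
  ring

theorem IsLocalMin.inner_add_mul_fderiv_eq_zero_and_nonneg [InnerProductSpace ℝ E] {b : E}
    {h : ℝ} (hmin : IsLocalMin (fun y => ‖y - b‖ ^ 2 + (u y - h) ^ 2) x)
    (hu : ContDiffAt ℝ 2 u x) (v : E) :
    ⟪x - b, v⟫_ℝ + (u x - h) * fderiv ℝ u x v = 0 ∧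
      0 ≤ ‖v‖ ^ 2 + fderiv ℝ u x v ^ 2 + (u x - h) * fderiv ℝ (fderiv ℝ u) x v v := by
  have hf := hu.eventually_hasDerivAt_comp_add_smul v
  set g : ℝ → ℝ := fun s =>
    ‖x - b‖ ^ 2 + 2 * s * ⟪x - b, v⟫_ℝ + s ^ 2 * ‖v‖ ^ 2 + (u (x + s • v) - h) ^ 2
  have hg : IsLocalMin g 0 := by
    have hmin' : IsLocalMin (fun y => ‖y - b‖ ^ 2 + (u y - h) ^ 2) (x + (0 : ℝ) • v) := by
      simpa using hmin
    simpa only [Function.comp_def, norm_add_smul_sub_sq] using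
      hmin'.comp_continuous (g := fun s : ℝ => x + s • v) (by fun_prop : Continuous _).continuousAt
  have hgd : ∀ᶠ s in 𝓝 0, HasDerivAt g (2 * ⟪x - b, v⟫_ℝ + 2 * s * ‖v‖ ^ 2
      + 2 * (u (x + s • v) - h) * fderiv ℝ u (x + s • v) v) s := by
    filter_upwards [hf] with s hs
    have h1 := (((hasDerivAt_id' s).const_mul 2).mul_const ⟪x - b, v⟫_ℝ).const_add (‖x - b‖ ^ 2)
    have h2 := (hasDerivAt_pow 2 s).mul_const (‖v‖ ^ 2)
    refine ((h1.add h2).add ((hs.sub_const h).pow 2)).congr_deriv ?_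
    push_cast
    ring
  have hg' : HasDerivAt (deriv g) (2 * ‖v‖ ^ 2 + 2 * fderiv ℝ u x v ^ 2
      + 2 * (u x - h) * fderiv ℝ (fderiv ℝ u) x v v) 0 := by
    have h1 := (((hasDerivAt_id' (0 : ℝ)).const_mul 2).mul_const (‖v‖ ^ 2)).const_add
      (2 * ⟪x - b, v⟫_ℝ)
    have h2 := ((hf.self_of_nhds.sub_const h).const_mul 2).mul
      (hu.hasDerivAt_fderiv_add_smul_apply v)
    refine ((h1.add h2).congr_of_eventuallyEq (hgd.mono fun s hs => hs.deriv)).congr_deriv ?_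
    simp only [zero_smul, add_zero]
    ring
  constructor
  · have := hg.deriv_eq_zero
    rw [hgd.self_of_nhds.deriv] at this
    simp only [zero_smul, add_zero] at this
    linarith
  · have := hg.deriv_deriv_nonneg hgd.self_of_nhds.continuousAt
    rw [hg'.deriv] at this
    linarith

end Line

section Coordinates

variable {n : ℕ} {u : En n → ℝ} {x : En n}

theorem fderiv_apply_eq_dotProduct (u : En n → ℝ) (x v : En n) :
    fderiv ℝ u x v = pgrad u x ⬝ᵥ v.ofLp := by
  conv_lhs => rw [← (EuclideanSpace.basisFun (Fin n) ℝ).sum_repr v]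
  simp [map_sum, dotProduct, pgrad, mul_comm]

theorem phess_eq (hu : DifferentiableAt ℝ (fderiv ℝ u) x) (i j : Fin n) :
    phess u x i j = fderiv ℝ (fderiv ℝ u) x (EuclideanSpace.single i 1)
      (EuclideanSpace.single j 1) := by
  rw [phess, fderiv_clm_apply hu (differentiableAt_const _)]
  simp

theorem fderiv_fderiv_apply_eq_dotProduct (hu : DifferentiableAt ℝ (fderiv ℝ u) x) (v : En n) :
    fderiv ℝ (fderiv ℝ u) x v v = v.ofLp ⬝ᵥ of (phess u x) *ᵥ v.ofLp := by
  conv_lhs => rw [← (EuclideanSpace.basisFun (Fin n) ℝ).sum_repr v]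
  simp only [EuclideanSpace.basisFun_repr, EuclideanSpace.basisFun_apply, map_sum, map_smul,
    _root_.sum_apply, _root_.smul_apply, smul_eq_mul, Finset.mul_sum, dotProduct, mulVec,
    of_apply, phess_eq hu, mul_comm]
  rw [Finset.sum_comm]
  exact Finset.sum_congr rfl fun _ _ => Finset.sum_congr rfl fun _ _ => by ring

theorem IsLocalMin.sub_eq_smul_gradVec_and_phess_le {b : En n} {h : ℝ}
    (hmin : IsLocalMin (fun y => ‖y - b‖ ^ 2 + (u y - h) ^ 2) x) (hu : ContDiffAt ℝ 2 u x) :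
    x - b = (h - u x) • gradVec u x ∧
      ∀ η : Fin n → ℝ, (h - u x) * (η ⬝ᵥ of (phess u x) *ᵥ η) ≤ η ⬝ᵥ η + (pgrad u x ⬝ᵥ η) ^ 2 := by
  have key := hmin.inner_add_mul_fderiv_eq_zero_and_nonneg hu
  refine ⟨ext_inner_right ℝ fun v => ?_, fun η => ?_⟩
  · have := (key v).1
    rw [fderiv_apply_eq_dotProduct] at this
    simp only [inner_smul_left, EuclideanSpace.inner_eq_star_dotProduct, gradVec, WithLp.ofLp_sub,
      star_trivial, dotProduct_sub, dotProduct_comm, Real.ringHom_apply] at this ⊢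
    linarith
  · have hD : DifferentiableAt ℝ (fderiv ℝ u) x :=
      (hu.fderiv_right (m := 1) (by norm_num)).differentiableAt one_ne_zero
    have := (key (WithLp.toLp 2 η)).2
    rw [fderiv_apply_eq_dotProduct, fderiv_fderiv_apply_eq_dotProduct hD,
      ← real_inner_self_eq_norm_sq, EuclideanSpace.inner_toLp_toLp] at this
    simp only [star_trivial] at this
    linarith

end Coordinates

/-- The radius `r ≥ 0` of the sphere `∂B_r((b, σ r))` through `(x, t)`: the nonnegative root of
`(1 - σ²) r² + 2 σ t r = |x - b|² + t²`. -/
def familyRadius {n : ℕ} (σ : ℝ) (b x : En n) (t : ℝ) : ℝ :=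
  (Real.sqrt (σ ^ 2 * t ^ 2 + (1 - σ ^ 2) * (dist x b ^ 2 + t ^ 2)) - σ * t) / (1 - σ ^ 2)

theorem continuous_familyRadius {n : ℕ} (σ : ℝ) (b : En n) :
    Continuous fun q : En n × ℝ => familyRadius σ b q.1 q.2 := by
  unfold familyRadius
  fun_prop

section SphereFamily

variable {n : ℕ} {σ : ℝ} (hσ : σ ∈ Set.Ioo (0 : ℝ) 1) (b x : En n) (t : ℝ)
include hσ

theorem onSphereH_familyRadius :
    onSphereH b (σ * familyRadius σ b x t) (familyRadius σ b x t) x t := by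
  have h1 : 0 < 1 - σ ^ 2 := by nlinarith [hσ.1, hσ.2]
  have hD := Real.sq_sqrt (show 0 ≤ σ ^ 2 * t ^ 2 + (1 - σ ^ 2) * (dist x b ^ 2 + t ^ 2) by
    positivity)
  unfold onSphereH familyRadius
  generalize Real.sqrt _ = D at hD
  field_simp
  linear_combination (σ ^ 2 - 1) * hD

theorem familyRadius_nonneg : 0 ≤ familyRadius σ b x t := by
  have h1 : 0 < 1 - σ ^ 2 := by nlinarith [hσ.1, hσ.2]
  refine div_nonneg (sub_nonneg.mpr (Real.le_sqrt_of_sq_le ?_)) h1.le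
  nlinarith [mul_nonneg h1.le (add_nonneg (sq_nonneg (dist x b)) (sq_nonneg t))]

theorem familyRadius_pos {x : En n} (hx : x ≠ b) : 0 < familyRadius σ b x t := by
  have h1 : 0 < 1 - σ ^ 2 := by nlinarith [hσ.1, hσ.2]
  refine div_pos (sub_pos.mpr (Real.lt_sqrt_of_sq_lt ?_)) h1
  nlinarith [mul_pos h1 (add_pos_of_pos_of_nonneg (pow_pos (dist_pos.mpr hx) 2) (sq_nonneg t))]

theorem inBallH_iff_familyRadius_lt {t r : ℝ} (ht : 0 ≤ t) (hr : 0 < r) :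
    inBallH b (σ * r) r x t ↔ familyRadius σ b x t < r := by
  have hsph := onSphereH_familyRadius hσ b x t
  have hρ := familyRadius_nonneg hσ b x t
  have h1 : 0 < 1 - σ ^ 2 := by nlinarith [hσ.1, hσ.2]
  unfold inBallH
  unfold onSphereH at hsph
  set ρ := familyRadius σ b x t
  have hfac : 0 < (1 - σ ^ 2) * (ρ + r) + 2 * σ * t := by nlinarith [hσ.1]
  have key : dist x b ^ 2 + (t - σ * r) ^ 2 - r ^ 2
      = (ρ - r) * ((1 - σ ^ 2) * (ρ + r) + 2 * σ * t) := by linear_combination hsph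
  constructor <;> intro h <;> nlinarith

end SphereFamily

section Nested

variable {n : ℕ} {σ : ℝ} {b x : En n} {t r R : ℝ}

theorem inBallH_of_le_of_lt (hσ : σ ∈ Set.Ioo (0 : ℝ) 1) (ht : 0 ≤ t) (hr : 0 < r)
    (hrR : r < R) (h : dist x b ^ 2 + (t - σ * r) ^ 2 ≤ r ^ 2) : inBallH b (σ * R) R x t := by
  have h1 : 0 < 1 - σ ^ 2 := by nlinarith [hσ.1, hσ.2]
  unfold inBallH
  nlinarith [mul_pos (sub_pos.mpr hrR) (add_pos_of_pos_of_nonneg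
    (mul_pos h1 (add_pos hr (hr.trans hrR))) (mul_nonneg (mul_nonneg zero_le_two hσ.1.le) ht))]

theorem inBallH_of_onSphereH_of_div_lt_dist {c : ℝ} (hσ : σ ∈ Set.Ioo (0 : ℝ) 1) (ht : 0 ≤ t)
    (htc : t ≤ c) (hr : 0 < r) (hrR : r < R) (hcx : c / σ < dist x b)
    (hsph : onSphereH b (σ * r) r x t) : inBallH b (σ * R) R x c := by
  unfold onSphereH at hsph
  have hdr : dist x b ≤ r := by nlinarith [dist_nonneg (x := x) (y := b), sq_nonneg (t - σ * r)]
  have hcr : c < σ * r := by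
    have := (div_lt_iff₀ hσ.1).mp hcx
    nlinarith [hσ.1]
  refine inBallH_of_le_of_lt hσ (ht.trans htc) hr hrR ?_
  nlinarith

end Nested

def subgraph {n : ℕ} (Ω : Set (En n)) (u : En n → ℝ) : Set (En n × ℝ) :=
  {q | q.1 ∈ closure Ω ∧ 0 ≤ q.2 ∧ q.2 ≤ u q.1}

theorem isCompact_subgraph {n : ℕ} {Ω : Set (En n)} {u : En n → ℝ} (hΩ : Bornology.IsBounded Ω)
    (hu : ContinuousOn u (closure Ω)) : IsCompact (subgraph Ω u) := by
  have hcl : IsCompact (closure Ω) := isCompact_of_isClosed_isBounded isClosed_closure hΩ.closure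
  obtain ⟨M, hM⟩ := hcl.bddAbove_image hu
  have hclosed : IsClosed (subgraph Ω u) := by
    have := (isClosed_closure.prod (isClosed_Ici (a := (0 : ℝ)))).isClosed_le
      continuous_snd.continuousOn (hu.comp continuous_fst.continuousOn fun q hq => hq.1)
    convert this using 1
    ext q
    simp [subgraph, and_assoc]
  refine (hcl.prod (isCompact_Icc (a := 0) (b := M))).of_isClosed_subset hclosed ?_
  rintro ⟨y, s⟩ ⟨hy, hs0, hsu⟩
  exact ⟨hy, hs0, hsu.trans (hM ⟨y, hy, rfl⟩)⟩

section Touching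

variable {n : ℕ} {Ω : Set (En n)} {u : En n → ℝ} {b x : En n} {r : ℝ}

theorem eq_of_touching_below_graph {t h : ℝ} (hΩ : IsOpen Ω) (hx : x ∈ Ω)
    (hcont : ContinuousAt u x) (ht : 0 ≤ t) (htu : t < u x)
    (hout : ∀ q ∈ subgraph Ω u, ¬ inBallH b h r q.1 q.2) (hsph : onSphereH b h r x t) :
    x = b := by
  have hmin : IsLocalMin (fun y => ‖y - b‖ ^ 2 + ((fun _ => t) y - h) ^ 2) x := by
    filter_upwards [hΩ.mem_nhds hx, continuousAt_const.eventually_lt hcont htu] with y hy hyt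
    have := hout (y, t) ⟨subset_closure hy, ht, hyt.le⟩
    simp only [inBallH, onSphereH, dist_eq_norm, not_lt] at this hsph
    linarith
  have hgrad := (hmin.sub_eq_smul_gradVec_and_phess_le contDiffAt_const).1
  have h0 : gradVec (fun _ : En n => t) x = 0 := by
    ext i
    simp [gradVec, pgrad]
  rwa [h0, smul_zero, sub_eq_zero] at hgrad

theorem dotProduct_curvMat_mulVec_le_of_touching {σ : ℝ} (hσ : σ ∈ Set.Ioo (0 : ℝ) 1)
    (hΩ : IsOpen Ω) (hx : x ∈ Ω) (hu : ContDiffAt ℝ 2 u x) (hpos : 0 < u x) (hxb : x ≠ b)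
    (hr : 0 < r) (hout : ∀ q ∈ subgraph Ω u, ¬ inBallH b (σ * r) r q.1 q.2)
    (hsph : onSphereH b (σ * r) r x (u x)) (ζ : Fin n → ℝ) :
    ζ ⬝ᵥ curvMat u x *ᵥ ζ ≤ σ * (ζ ⬝ᵥ ζ) := by
  unfold onSphereH at hsph
  rw [dist_eq_norm] at hsph
  have hlow : u x ≤ σ * r := by
    by_contra! hgt
    refine hout (x, σ * r) ⟨subset_closure hx, by positivity [hσ.1], hgt.le⟩ ?_
    have : 0 < (u x - σ * r) ^ 2 := by nlinarith
    simp only [inBallH, dist_eq_norm, sub_self]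
    linarith
  have hmin : IsLocalMin (fun y => ‖y - b‖ ^ 2 + (u y - σ * r) ^ 2) x := by
    filter_upwards [hΩ.mem_nhds hx, continuousAt_const.eventually_lt hu.continuousAt hpos]
      with y hy hy0
    have := hout (y, u y) ⟨subset_closure hy, hy0.le, le_rfl⟩
    simp only [inBallH, dist_eq_norm, not_lt] at this
    linarith
  obtain ⟨hgrad, hhess⟩ := hmin.sub_eq_smul_gradVec_and_phess_le hu
  set δ := σ * r - u x with hδdef
  have hδ : 0 < δ := by
    refine (sub_nonneg.mpr hlow).lt_of_ne fun h => hxb ?_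
    rw [← sub_eq_zero, hgrad, hδdef, ← h, zero_smul]
  have hwδ : wgt u x * δ = r := by
    have hnorm : ‖x - b‖ ^ 2 = δ ^ 2 * (pgrad u x ⬝ᵥ pgrad u x) := by
      rw [hgrad, norm_smul, mul_pow, Real.norm_eq_abs, sq_abs, ← real_inner_self_eq_norm_sq,
        gradVec, EuclideanSpace.inner_toLp_toLp, star_trivial]
    have hsq : (wgt u x * δ) ^ 2 = r ^ 2 := by
      rw [mul_pow, wgt_sq]
      linear_combination hsph - hnorm + (δ + σ * r - u x) * hδdef
    exact (sq_eq_sq₀ (mul_pos (wgt_pos u x) hδ).le hr.le).mp hsq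
  exact dotProduct_curvMat_mulVec_le hδ hpos.le (by rw [hwδ]; ring) hhess ζ

end Touching

theorem statement5_general {n : ℕ} (k : ℕ) (hkn : k ≤ n)
    (σ c : ℝ) (hσ : σ ∈ Set.Ioo (0:ℝ) 1)
    (Ω : Set (En n)) (hΩo : IsOpen Ω) (hΩb : Bornology.IsBounded Ω)
    (u : En n → ℝ)
    (hu : ContDiffOn ℝ 2 u Ω) (hupos : ∀ x ∈ Ω, 0 < u x)
    (hucont : ContinuousOn u (closure Ω))
    (huconv : ∀ x ∈ Ω, (curvMat u x).PosDef)
    (hcurv : ∀ x ∈ Ω, (n.choose k : ℝ) * σ ^ k < sigmaElem k (curvMat u x))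
    (hbdry : ∀ x ∈ frontier Ω, u x = c)
    (R : ℝ) (hR : 0 < R) (b' : En n)
    (hb1 : b' ∉ closure Ω)
    (hb2 : c / σ < Metric.infDist b' (frontier Ω))
    (hdisj : ∀ x ∈ closure Ω, ¬ inBallH b' (σ * R) R x c) :
    ∀ x ∈ Ω, ¬ inBallH b' (σ * R) R x (u x) := by
  intro x hx hball
  have hxK : (x, u x) ∈ subgraph Ω u := ⟨subset_closure hx, (hupos x hx).le, le_rfl⟩
  obtain ⟨⟨x₀, t₀⟩, h₀, hmin⟩ := (isCompact_subgraph hΩb hucont).exists_isMinOn ⟨_, hxK⟩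
    (continuous_familyRadius σ b').continuousOn
  set r₀ := familyRadius σ b' x₀ t₀
  have hx₀b : x₀ ≠ b' := fun h => hb1 (h ▸ h₀.1)
  have hr₀ : 0 < r₀ := familyRadius_pos hσ b' t₀ hx₀b
  have hr₀R : r₀ < R := (hmin hxK).trans_lt
    ((inBallH_iff_familyRadius_lt hσ b' x (hupos x hx).le hR).mp hball)
  have hout : ∀ q ∈ subgraph Ω u, ¬ inBallH b' (σ * r₀) r₀ q.1 q.2 := fun q hq hin =>
    ((inBallH_iff_familyRadius_lt hσ b' q.1 hq.2.1 hr₀).mp hin).not_ge (hmin hq)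
  have hsph := onSphereH_familyRadius hσ b' x₀ t₀
  rcases closure_eq_self_union_frontier Ω ▸ h₀.1 with hx₀ | hx₀
  · have hux₀ := hu.contDiffAt (hΩo.mem_nhds hx₀)
    rcases h₀.2.2.lt_or_eq with hlt | heq
    · exact hx₀b (eq_of_touching_below_graph hΩo hx₀ hux₀.continuousAt h₀.2.1 hlt hout hsph)
    · exact (hcurv x₀ hx₀).not_ge (sigmaElem_le_of_dotProduct_mulVec_le hkn
        (huconv x₀ hx₀).posSemidef (dotProduct_curvMat_mulVec_le_of_touching hσ hΩo hx₀ hux₀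
          (hupos x₀ hx₀) hx₀b hr₀ hout (heq ▸ hsph)))
  · refine hdisj x₀ h₀.1 (inBallH_of_onSphereH_of_div_lt_dist hσ h₀.2.1 (hbdry x₀ hx₀ ▸ h₀.2.2)
      hr₀ hr₀R ?_ hsph)
    exact hb2.trans_le (dist_comm b' x₀ ▸ infDist_le_dist_of_mem hx₀)

/-- Lemma: spherical barrier: a strictly locally convex graph with
`σ_k(κ) > σ_k(σ,…,σ)` and boundary at height `c` avoids the ball `B_R((b', σR))` whenever the
ball avoids `Ω̄ × {c}`, `b' ∉ Ω̄` and `dist(b', ∂Ω) > c/σ`. -/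
theorem statement5 {n : ℕ} (k : ℕ) (hk1 : 1 ≤ k) (hkn : k ≤ n)
    (σ c : ℝ) (hσ : σ ∈ Set.Ioo (0:ℝ) 1) (hc : 0 ≤ c)
    (Ω : Set (En n)) (hΩo : IsOpen Ω) (hΩb : Bornology.IsBounded Ω)
    (u : En n → ℝ)
    (hu : ContDiffOn ℝ 2 u Ω) (hupos : ∀ x ∈ Ω, 0 < u x)
    (hucont : ContinuousOn u (closure Ω))
    (huconv : ∀ x ∈ Ω, (curvMat u x).PosDef)
    (hcurv : ∀ x ∈ Ω, (n.choose k : ℝ) * σ ^ k < sigmaElem k (curvMat u x))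
    (hbdry : ∀ x ∈ frontier Ω, u x = c)
    (R : ℝ) (hR : 0 < R) (b' : En n)
    (hb1 : b' ∉ closure Ω)
    (hb2 : c / σ < Metric.infDist b' (frontier Ω))
    (hdisj : ∀ x ∈ closure Ω, ¬ inBallH b' (σ * R) R x c) :
    ∀ x ∈ Ω, ¬ inBallH b' (σ * R) R x (u x) :=
  statement5_general k hkn σ c hσ Ω hΩo hΩb u hu hupos hucont huconv hcurv hbdry R hR b' hb1 hb2
    hdisj
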